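/- Let H = H_C + H_R + ∑_{i=1}^{k} ∑_{q=1}^{Q_i} β^i X_{i,q} Y_{i,q} on ℋ_C ⊗ ℋ_R, with β ∈ (0,1), H_C having simple ground state |0⟩_C of energy λ_C and gap Δ_C > 0, X_{i,q}|0⟩_C = 0 for all i,q, and H_R acting on ℋ_R. Set Q̄ := max_i Q_i, X̄ := max_{i,q}‖X_{i,q}‖, Ȳ := max_{i,q}‖Y_{i,q}‖. If β·(1-β^k)/(1-β)·Q̄·X̄·Ȳ < Δ_C, then the ground state energy of H is λ_C + min spec(H_R) and every ground state is of the form |0⟩_C ⊗ |ψ⟩ with H_R|ψ⟩ = min spec(H_R)·|ψ⟩. -/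

import Mathlib

open Kronecker

/-- The operator (ℓ²→ℓ²) norm of a complex matrix. -/
noncomputable def opNorm {k : ℕ} (M : Matrix (Fin k) (Fin k) ℂ) : ℝ :=
  ‖Matrix.toEuclideanCLM (𝕜 := ℂ) M‖

/-!
After shifting `H_C` and `H_R` by their ground energies, `H_C ≥ 0` with `H_C ≥ Δ_C` on `|0⟩^⊥`,
`H_R ≥ 0`, and the coupling `W = ∑ β^i X_{i,q} ⊗ Y_{i,q}` annihilates every `|0⟩ ⊗ ψ` while
`‖W‖ ≤ ∑ β^i ‖X_{i,q}‖ ‖Y_{i,q}‖ < Δ_C`. Write `v = |0⟩ ⊗ ψ + u` with `u ⊥ |0⟩ ⊗ ℋ_R`. As the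
Hermitian operator `H_C ⊗ 1 + W` annihilates `|0⟩ ⊗ ψ`, it only sees `u`, so
`⟨v, H v⟩ = ⟨u, (H_C ⊗ 1 + W) u⟩ + ⟨v, (1 ⊗ H_R) v⟩ ≥ (Δ_C - ‖W‖) ‖u‖²`.
Hence the shifted `H` is `≥ 0`, and `H v = 0` forces `u = 0` and then `H_R ψ = 0`.
-/

open Matrix WithLp
open scoped InnerProductSpace ComplexOrder Matrix.Norms.L2Operator

namespace Matrix

section Spectral

variable {ι : Type*}

lemma IsHermitian.sub_smul_one [DecidableEq ι] {A : Matrix ι ι ℂ} (hA : A.IsHermitian) (a : ℝ) :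
    (A - (a : ℂ) • 1).IsHermitian :=
  hA.sub (isHermitian_one.smul (Complex.conj_ofReal a))

variable [Fintype ι]

lemma star_dotProduct_eq_inner (x y : ι → ℂ) : star x ⬝ᵥ y = ⟪toLp 2 x, toLp 2 y⟫_ℂ := by
  rw [EuclideanSpace.inner_toLp_toLp, dotProduct_comm]

lemma star_dotProduct_self_eq_norm_sq (x : ι → ℂ) : star x ⬝ᵥ x = (‖toLp 2 x‖ ^ 2 : ℝ) := by
  rw [star_dotProduct_eq_inner, inner_self_eq_norm_sq_to_K]
  norm_cast

lemma neg_norm_mul_le_re_star_dotProduct_mulVec [DecidableEq ι] (M : Matrix ι ι ℂ) (x : ι → ℂ) :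
    -(‖M‖ * ‖toLp 2 x‖ ^ 2) ≤ (star x ⬝ᵥ (M *ᵥ x)).re := by
  refine neg_le_of_abs_le ((Complex.abs_re_le_norm _).trans ?_)
  rw [star_dotProduct_eq_inner, ← toEuclideanCLM_toLp]
  calc _ ≤ ‖toLp 2 x‖ * ‖toEuclideanCLM (𝕜 := ℂ) M (toLp 2 x)‖ := norm_inner_le_norm _ _
    _ ≤ ‖toLp 2 x‖ * (‖M‖ * ‖toLp 2 x‖) := by
      gcongr
      exact (toEuclideanCLM (𝕜 := ℂ) M).le_opNorm _
    _ = ‖M‖ * ‖toLp 2 x‖ ^ 2 := by ring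

lemma IsHermitian.star_dotProduct_mulVec_of_mulVec_eq_smul {A : Matrix ι ι ℂ} (hA : A.IsHermitian)
    {e : ι → ℂ} {μ : ℝ} (he : A *ᵥ e = (μ : ℂ) • e) (x : ι → ℂ) :
    star e ⬝ᵥ (A *ᵥ x) = μ * (star e ⬝ᵥ x) := by
  rw [dotProduct_mulVec, ← hA.eq, ← star_mulVec, he, star_smul, smul_dotProduct]
  simp

lemma IsHermitian.star_dotProduct_mulVec_add_of_mulVec_eq_zero {M : Matrix ι ι ℂ}
    (hM : M.IsHermitian) {g : ι → ℂ} (hg : M *ᵥ g = 0) (y : ι → ℂ) :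
    star (y + g) ⬝ᵥ (M *ᵥ (y + g)) = star y ⬝ᵥ (M *ᵥ y) := by
  have hgM := hM.star_dotProduct_mulVec_of_mulVec_eq_smul (e := g) (μ := 0) (by simp [hg]) y
  rw [mulVec_add, hg, add_zero, star_add, add_dotProduct, hgM]
  simp

variable [DecidableEq ι]

lemma sub_smul_one_mulVec (A : Matrix ι ι ℂ) (c : ℂ) (v : ι → ℂ) :
    (A - c • 1) *ᵥ v = A *ᵥ v - c • v := by
  rw [sub_mulVec, smul_mulVec, one_mulVec]

lemma mulVec_eq_smul_of_sub_smul_one {A : Matrix ι ι ℂ} {a μ : ℝ} {e : ι → ℂ}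
    (he : (A - (a : ℂ) • 1) *ᵥ e = (μ : ℂ) • e) : A *ᵥ e = ((μ + a : ℝ) : ℂ) • e := by
  rw [sub_smul_one_mulVec, sub_eq_iff_eq_add] at he
  rw [he, Complex.ofReal_add, add_smul]

lemma IsHermitian.eigenvectorBasis_coe_ne_zero {A : Matrix ι ι ℂ} (hA : A.IsHermitian) (j : ι) :
    ⇑(hA.eigenvectorBasis j) ≠ 0 := fun h =>
  hA.eigenvectorBasis.orthonormal.ne_zero j (by ext i; exact congrFun h i)

lemma IsHermitian.mulVec_eigenvectorBasis_ofReal_smul {A : Matrix ι ι ℂ} (hA : A.IsHermitian)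
    (j : ι) :
    A *ᵥ ⇑(hA.eigenvectorBasis j) = (hA.eigenvalues j : ℂ) • ⇑(hA.eigenvectorBasis j) := by
  rw [hA.mulVec_eigenvectorBasis, Complex.coe_smul]

lemma IsHermitian.mul_norm_sq_le_re_star_dotProduct_mulVec {A : Matrix ι ι ℂ}
    (hA : A.IsHermitian) {c : ℝ} {x : ι → ℂ}
    (h : ∀ j, c ≤ hA.eigenvalues j ∨ star ⇑(hA.eigenvectorBasis j) ⬝ᵥ x = 0) :
    c * ‖toLp 2 x‖ ^ 2 ≤ (star x ⬝ᵥ (A *ᵥ x)).re := by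
  set b := hA.eigenvectorBasis
  have hexpand :
      star x ⬝ᵥ (A *ᵥ x) = ∑ j, (hA.eigenvalues j : ℂ) * ‖⟪b j, toLp 2 x⟫_ℂ‖ ^ 2 := by
    rw [star_dotProduct_eq_inner, ← b.sum_inner_mul_inner]
    refine Finset.sum_congr rfl fun j _ => ?_
    have hj := hA.star_dotProduct_mulVec_of_mulVec_eq_smul
      (hA.mulVec_eigenvectorBasis_ofReal_smul j) x
    rw [star_dotProduct_eq_inner, star_dotProduct_eq_inner, toLp_ofLp] at hj
    rw [hj, ← inner_conj_symm, mul_left_comm, RCLike.conj_mul]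
    rfl
  rw [hexpand, ← b.sum_sq_norm_inner_right, Finset.mul_sum, Complex.re_sum]
  refine Finset.sum_le_sum fun j _ => ?_
  norm_cast
  rcases h j with hj | hj
  · gcongr
  · rw [star_dotProduct_eq_inner] at hj
    simp [b, hj]

lemma IsHermitian.mul_norm_sq_le_of_spectral_gap {A : Matrix ι ι ℂ} (hA : A.IsHermitian)
    {a Δ : ℝ} {g : ι → ℂ}
    (hgap : ∀ (v : ι → ℂ) (μ : ℝ), v ≠ 0 → A *ᵥ v = (μ : ℂ) • v → μ = a ∨ a + Δ ≤ μ)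
    (hsimple : ∀ v : ι → ℂ, A *ᵥ v = (a : ℂ) • v → ∃ c : ℂ, v = c • g)
    {y : ι → ℂ} (hy : star g ⬝ᵥ y = 0) :
    Δ * ‖toLp 2 y‖ ^ 2 ≤ (star y ⬝ᵥ ((A - (a : ℂ) • 1) *ᵥ y)).re := by
  set hA₀ := hA.sub_smul_one a
  refine hA₀.mul_norm_sq_le_re_star_dotProduct_mulVec fun j => ?_
  have he := mulVec_eq_smul_of_sub_smul_one (hA₀.mulVec_eigenvectorBasis_ofReal_smul j)
  rcases hgap _ _ (hA₀.eigenvectorBasis_coe_ne_zero j) he with hj | hj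
  · obtain ⟨c, hc⟩ := hsimple _ (by rwa [hj] at he)
    right
    rw [hc, star_smul, smul_dotProduct, hy, smul_zero]
  · left
    linarith

lemma IsHermitian.posSemidef_sub_smul_one {B : Matrix ι ι ℂ} (hB : B.IsHermitian) {b : ℝ}
    (hb : ∀ (v : ι → ℂ) (μ : ℝ), v ≠ 0 → B *ᵥ v = (μ : ℂ) • v → b ≤ μ) :
    (B - (b : ℂ) • 1).PosSemidef := by
  set hB₀ := hB.sub_smul_one b
  refine hB₀.posSemidef_iff_eigenvalues_nonneg.mpr fun j => ?_
  have := hb _ _ (hB₀.eigenvectorBasis_coe_ne_zero j)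
    (mulVec_eq_smul_of_sub_smul_one (hB₀.mulVec_eigenvectorBasis_ofReal_smul j))
  simpa using this

end Spectral

section Tensor

variable {ι κ : Type*}

def pureTensor {R : Type*} [Mul R] (g : ι → R) (ψ : κ → R) : ι × κ → R :=
  fun p => g p.1 * ψ p.2

lemma pureTensor_eq_zero_iff {R : Type*} [MulZeroClass R] [NoZeroDivisors R] {g : ι → R}
    {ψ : κ → R} : pureTensor g ψ = 0 ↔ g = 0 ∨ ψ = 0 := by
  constructor
  · intro h
    by_contra! hne
    obtain ⟨i, hi⟩ := Function.ne_iff.1 hne.1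
    obtain ⟨j, hj⟩ := Function.ne_iff.1 hne.2
    exact mul_ne_zero hi hj (congrFun h (i, j))
  · rintro (rfl | rfl) <;> ext <;> simp [pureTensor]

/-- `pureTensor g (leftCoeff g v)` is the orthogonal projection of `v` onto `g ⊗ ℂ^κ`. -/
noncomputable def leftCoeff [Fintype ι] (g : ι → ℂ) (v : ι × κ → ℂ) : κ → ℂ :=
  fun j => (star g ⬝ᵥ fun i => v (i, j)) / (star g ⬝ᵥ g)

lemma star_dotProduct_col_sub_pureTensor_leftCoeff [Fintype ι] {g : ι → ℂ} (hg : g ≠ 0)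
    (v : ι × κ → ℂ) (j : κ) :
    (star g ⬝ᵥ fun i => (v - pureTensor g (leftCoeff g v)) (i, j)) = 0 := by
  have hgg : star g ⬝ᵥ g ≠ 0 := by rwa [Ne, dotProduct_star_self_eq_zero]
  have hcol : (fun i => (v - pureTensor g (leftCoeff g v)) (i, j)) =
      (fun i => v (i, j)) - leftCoeff g v j • g := by
    ext i
    simp [pureTensor, mul_comm]
  rw [hcol, dotProduct_sub, dotProduct_smul, smul_eq_mul, leftCoeff, div_mul_cancel₀ _ hgg,
    sub_self]

lemma IsHermitian.kronecker {A : Matrix ι ι ℂ} {B : Matrix κ κ ℂ} (hA : A.IsHermitian)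
    (hB : B.IsHermitian) : (A ⊗ₖ B).IsHermitian := by
  rw [IsHermitian, conjTranspose_kronecker, hA.eq, hB.eq]

lemma sub_smul_one_kronecker_one [DecidableEq ι] [DecidableEq κ] (A : Matrix ι ι ℂ) (c : ℂ) :
    (A - c • 1) ⊗ₖ (1 : Matrix κ κ ℂ) = A ⊗ₖ 1 - c • 1 := by
  rw [eq_sub_iff_add_eq, ← one_kronecker_one, ← smul_kronecker, ← add_kronecker, sub_add_cancel]

lemma one_kronecker_sub_smul_one [DecidableEq ι] [DecidableEq κ] (B : Matrix κ κ ℂ) (c : ℂ) :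
    (1 : Matrix ι ι ℂ) ⊗ₖ (B - c • 1) = 1 ⊗ₖ B - c • 1 := by
  rw [eq_sub_iff_add_eq, ← one_kronecker_one, ← kronecker_smul, ← kronecker_add, sub_add_cancel]

variable [Fintype ι] [Fintype κ]

lemma kronecker_mulVec_pureTensor {R : Type*} [CommSemiring R] (A : Matrix ι ι R)
    (B : Matrix κ κ R) (g : ι → R) (ψ : κ → R) :
    (A ⊗ₖ B) *ᵥ pureTensor g ψ = pureTensor (A *ᵥ g) (B *ᵥ ψ) := by
  ext ⟨i, j⟩
  simp only [pureTensor, mulVec, dotProduct, Fintype.sum_prod_type, kroneckerMap_apply,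
    Finset.sum_mul_sum]
  exact Finset.sum_congr rfl fun _ _ => Finset.sum_congr rfl fun _ _ => by ring

lemma norm_toLp_sq_eq_sum_col (v : ι × κ → ℂ) :
    ‖toLp 2 v‖ ^ 2 = ∑ j, ‖toLp 2 fun i => v (i, j)‖ ^ 2 := by
  simp only [EuclideanSpace.norm_sq_eq, Fintype.sum_prod_type]
  exact Finset.sum_comm

lemma norm_toLp_sq_eq_sum_row (v : ι × κ → ℂ) :
    ‖toLp 2 v‖ ^ 2 = ∑ i, ‖toLp 2 fun j => v (i, j)‖ ^ 2 := by
  simp only [EuclideanSpace.norm_sq_eq, Fintype.sum_prod_type]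

lemma kronecker_one_mulVec_apply {R : Type*} [Semiring R] [DecidableEq κ] (A : Matrix ι ι R)
    (v : ι × κ → R) (i : ι) (j : κ) :
    ((A ⊗ₖ (1 : Matrix κ κ R)) *ᵥ v) (i, j) = (A *ᵥ fun i' => v (i', j)) i := by
  simp [mulVec, dotProduct, Fintype.sum_prod_type, one_apply]

lemma one_kronecker_mulVec_apply {R : Type*} [Semiring R] [DecidableEq ι] (B : Matrix κ κ R)
    (v : ι × κ → R) (i : ι) (j : κ) :
    (((1 : Matrix ι ι R) ⊗ₖ B) *ᵥ v) (i, j) = (B *ᵥ fun j' => v (i, j')) j := by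
  simp [mulVec, dotProduct, Fintype.sum_prod_type, one_apply]

lemma star_dotProduct_kronecker_one_mulVec [DecidableEq κ] (A : Matrix ι ι ℂ)
    (v : ι × κ → ℂ) :
    star v ⬝ᵥ ((A ⊗ₖ (1 : Matrix κ κ ℂ)) *ᵥ v) =
      ∑ j, star (fun i => v (i, j)) ⬝ᵥ (A *ᵥ fun i => v (i, j)) := by
  simp only [dotProduct, Fintype.sum_prod_type, kronecker_one_mulVec_apply]
  exact Finset.sum_comm

lemma kronecker_one_add_mulVec_pureTensor [DecidableEq κ] {A : Matrix ι ι ℂ}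
    {W : Matrix (ι × κ) (ι × κ) ℂ} {g : ι → ℂ} (hAg : A *ᵥ g = 0)
    (hWg : ∀ ψ, W *ᵥ pureTensor g ψ = 0) (ψ : κ → ℂ) :
    (A ⊗ₖ (1 : Matrix κ κ ℂ) + W) *ᵥ pureTensor g ψ = 0 := by
  rw [add_mulVec, kronecker_mulVec_pureTensor, hAg, hWg, add_zero,
    pureTensor_eq_zero_iff.mpr (Or.inl rfl)]

variable [DecidableEq ι] [DecidableEq κ]

lemma l2_opNorm_kronecker_one_le (A : Matrix ι ι ℂ) : ‖A ⊗ₖ (1 : Matrix κ κ ℂ)‖ ≤ ‖A‖ := by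
  rw [cstar_norm_def, cstar_norm_def A]
  refine ContinuousLinearMap.opNorm_le_bound _ (norm_nonneg _) fun x => ?_
  refine le_of_sq_le_sq ?_ (by positivity)
  rw [mul_pow, ← toLp_ofLp 2 x, toEuclideanCLM_toLp, norm_toLp_sq_eq_sum_col,
    norm_toLp_sq_eq_sum_col, Finset.mul_sum]
  refine Finset.sum_le_sum fun j _ => ?_
  simp only [kronecker_one_mulVec_apply]
  rw [← mul_pow, ← toEuclideanCLM_toLp]
  gcongr
  exact (toEuclideanCLM (𝕜 := ℂ) A).le_opNorm _

lemma l2_opNorm_one_kronecker_le (B : Matrix κ κ ℂ) : ‖(1 : Matrix ι ι ℂ) ⊗ₖ B‖ ≤ ‖B‖ := by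
  rw [cstar_norm_def, cstar_norm_def B]
  refine ContinuousLinearMap.opNorm_le_bound _ (norm_nonneg _) fun x => ?_
  refine le_of_sq_le_sq ?_ (by positivity)
  rw [mul_pow, ← toLp_ofLp 2 x, toEuclideanCLM_toLp, norm_toLp_sq_eq_sum_row,
    norm_toLp_sq_eq_sum_row, Finset.mul_sum]
  refine Finset.sum_le_sum fun i _ => ?_
  simp only [one_kronecker_mulVec_apply]
  rw [← mul_pow, ← toEuclideanCLM_toLp]
  gcongr
  exact (toEuclideanCLM (𝕜 := ℂ) B).le_opNorm _

lemma l2_opNorm_kronecker_le (A : Matrix ι ι ℂ) (B : Matrix κ κ ℂ) :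
    ‖A ⊗ₖ B‖ ≤ ‖A‖ * ‖B‖ := by
  rw [show A ⊗ₖ B = (A ⊗ₖ 1) * (1 ⊗ₖ B) by rw [← mul_kronecker_mul, mul_one, one_mul]]
  exact (norm_mul_le _ _).trans (mul_le_mul (l2_opNorm_kronecker_one_le A)
    (l2_opNorm_one_kronecker_le B) (norm_nonneg _) (norm_nonneg _))

end Tensor

section Perturbation

variable {ι κ : Type*} [Fintype ι] [Fintype κ] [DecidableEq ι] [DecidableEq κ]
  {A : Matrix ι ι ℂ} {B : Matrix κ κ ℂ} {W : Matrix (ι × κ) (ι × κ) ℂ} {g : ι → ℂ} {Δ : ℝ}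

lemma mul_norm_sq_sub_pureTensor_le_re_star_dotProduct_mulVec (hA : A.IsHermitian)
    (hAg : A *ᵥ g = 0)
    (hgap : ∀ y, star g ⬝ᵥ y = 0 → Δ * ‖toLp 2 y‖ ^ 2 ≤ (star y ⬝ᵥ (A *ᵥ y)).re)
    (hB : B.PosSemidef) (hW : W.IsHermitian) (hWg : ∀ ψ, W *ᵥ pureTensor g ψ = 0)
    (hg : g ≠ 0) (v : ι × κ → ℂ) :
    (Δ - ‖W‖) * ‖toLp 2 (v - pureTensor g (leftCoeff g v))‖ ^ 2 ≤
      (star v ⬝ᵥ ((A ⊗ₖ 1 + 1 ⊗ₖ B + W) *ᵥ v)).re := by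
  set G := pureTensor g (leftCoeff g v)
  set u := v - G
  have hK : (A ⊗ₖ (1 : Matrix κ κ ℂ) + W).IsHermitian := (hA.kronecker isHermitian_one).add hW
  have hsplit : star v ⬝ᵥ ((A ⊗ₖ 1 + 1 ⊗ₖ B + W) *ᵥ v) =
      star u ⬝ᵥ ((A ⊗ₖ 1) *ᵥ u) + star u ⬝ᵥ (W *ᵥ u) + star v ⬝ᵥ ((1 ⊗ₖ B) *ᵥ v) := by
    have hvu : v = u + G := (sub_add_cancel v G).symm
    rw [add_right_comm, add_mulVec, dotProduct_add, hvu,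
      hK.star_dotProduct_mulVec_add_of_mulVec_eq_zero
        (kronecker_one_add_mulVec_pureTensor hAg hWg _),
      add_mulVec, dotProduct_add, ← hvu]
  have hAu : Δ * ‖toLp 2 u‖ ^ 2 ≤ (star u ⬝ᵥ ((A ⊗ₖ 1) *ᵥ u)).re := by
    rw [star_dotProduct_kronecker_one_mulVec, Complex.re_sum, norm_toLp_sq_eq_sum_col,
      Finset.mul_sum]
    exact Finset.sum_le_sum fun j _ =>
      hgap _ (star_dotProduct_col_sub_pureTensor_leftCoeff hg v j)
  have hWu := neg_norm_mul_le_re_star_dotProduct_mulVec W u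
  have hBv := (PosSemidef.one.kronecker hB).re_dotProduct_nonneg v
  rw [hsplit, Complex.add_re, Complex.add_re]
  simp only [RCLike.re_to_complex] at hBv
  linarith

theorem nonneg_and_exists_pureTensor_of_mulVec_eq_smul (hA : A.IsHermitian) (hAg : A *ᵥ g = 0)
    (hgap : ∀ y, star g ⬝ᵥ y = 0 → Δ * ‖toLp 2 y‖ ^ 2 ≤ (star y ⬝ᵥ (A *ᵥ y)).re)
    (hB : B.PosSemidef) (hW : W.IsHermitian) (hWg : ∀ ψ, W *ᵥ pureTensor g ψ = 0)
    (hg : g ≠ 0) (hWΔ : ‖W‖ < Δ) {v : ι × κ → ℂ} (hv : v ≠ 0) {E : ℝ}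
    (hE : (A ⊗ₖ 1 + 1 ⊗ₖ B + W) *ᵥ v = (E : ℂ) • v) :
    0 ≤ E ∧ (E = 0 → ∃ ψ, v = pureTensor g ψ ∧ B *ᵥ ψ = 0) := by
  have hkey := mul_norm_sq_sub_pureTensor_le_re_star_dotProduct_mulVec hA hAg hgap hB hW hWg hg v
  rw [hE, dotProduct_smul, star_dotProduct_self_eq_norm_sq, smul_eq_mul, ← Complex.ofReal_mul,
    Complex.ofReal_re] at hkey
  have hv' : 0 < ‖toLp 2 v‖ ^ 2 := by
    have : toLp 2 v ≠ 0 := by simpa using hv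
    positivity
  have hu := mul_nonneg (sub_nonneg.2 hWΔ.le)
    (sq_nonneg ‖toLp 2 (v - pureTensor g (leftCoeff g v))‖)
  refine ⟨nonneg_of_mul_nonneg_left (hu.trans hkey) hv', fun hE0 => ?_⟩
  subst hE0
  have hvG : v = pureTensor g (leftCoeff g v) := by
    have := nonpos_of_mul_nonpos_right (by simpa using hkey) (sub_pos.2 hWΔ)
    simpa [sub_eq_zero] using this
  refine ⟨_, hvG, ?_⟩
  rw [hvG, add_right_comm, add_mulVec, kronecker_one_add_mulVec_pureTensor hAg hWg,
    kronecker_mulVec_pureTensor, one_mulVec, zero_add, Complex.ofReal_zero, zero_smul,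
    pureTensor_eq_zero_iff] at hE
  exact hE.resolve_left hg

theorem le_and_exists_pureTensor_of_mulVec_eq_smul {a b : ℝ} (hA : A.IsHermitian)
    (hB : B.IsHermitian) (hW : W.IsHermitian) (hg : g ≠ 0) (hAg : A *ᵥ g = (a : ℂ) • g)
    (hgap : ∀ (v : ι → ℂ) (μ : ℝ), v ≠ 0 → A *ᵥ v = (μ : ℂ) • v → μ = a ∨ a + Δ ≤ μ)
    (hsimple : ∀ v : ι → ℂ, A *ᵥ v = (a : ℂ) • v → ∃ c : ℂ, v = c • g)
    (hb : ∀ (v : κ → ℂ) (μ : ℝ), v ≠ 0 → B *ᵥ v = (μ : ℂ) • v → b ≤ μ)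
    (hWg : ∀ ψ, W *ᵥ pureTensor g ψ = 0) (hWΔ : ‖W‖ < Δ) {v : ι × κ → ℂ} (hv : v ≠ 0) {E : ℝ}
    (hE : (A ⊗ₖ 1 + 1 ⊗ₖ B + W) *ᵥ v = (E : ℂ) • v) :
    a + b ≤ E ∧ (E = a + b → ∃ ψ, v = pureTensor g ψ ∧ B *ᵥ ψ = (b : ℂ) • ψ) := by
  have hshift : A ⊗ₖ 1 + 1 ⊗ₖ B + W - ((a + b : ℝ) : ℂ) • 1 =
      (A - (a : ℂ) • 1) ⊗ₖ 1 + 1 ⊗ₖ (B - (b : ℂ) • 1) + W := by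
    rw [sub_smul_one_kronecker_one, one_kronecker_sub_smul_one, Complex.ofReal_add, add_smul]
    abel
  have hE₀ : ((A - (a : ℂ) • 1) ⊗ₖ 1 + 1 ⊗ₖ (B - (b : ℂ) • 1) + W) *ᵥ v =
      ((E - (a + b) : ℝ) : ℂ) • v := by
    rw [← hshift, sub_smul_one_mulVec, hE, Complex.ofReal_sub, sub_smul]
  obtain ⟨hnonneg, hkernel⟩ := nonneg_and_exists_pureTensor_of_mulVec_eq_smul
    (hA.sub_smul_one a) (by rw [sub_smul_one_mulVec, hAg, sub_self])
    (fun y hy => hA.mul_norm_sq_le_of_spectral_gap hgap hsimple hy)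
    (hB.posSemidef_sub_smul_one hb) hW hWg hg hWΔ hv hE₀
  refine ⟨by linarith, fun hEab => ?_⟩
  obtain ⟨ψ, hvψ, hψ⟩ := hkernel (by rw [hEab, sub_self])
  exact ⟨ψ, hvψ, by rwa [sub_smul_one_mulVec, sub_eq_zero] at hψ⟩

lemma kronecker_add_mulVec_pureTensor_eq_smul {a b : ℝ} (hAg : A *ᵥ g = (a : ℂ) • g)
    (hWg : ∀ ψ, W *ᵥ pureTensor g ψ = 0) {ψ : κ → ℂ} (hBψ : B *ᵥ ψ = (b : ℂ) • ψ) :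
    (A ⊗ₖ 1 + 1 ⊗ₖ B + W) *ᵥ pureTensor g ψ = ((a + b : ℝ) : ℂ) • pureTensor g ψ := by
  rw [add_mulVec, add_mulVec, kronecker_mulVec_pureTensor, kronecker_mulVec_pureTensor, hAg,
    hBψ, one_mulVec, one_mulVec, hWg, add_zero]
  ext p
  simp only [pureTensor, Pi.add_apply, Pi.smul_apply, smul_eq_mul]
  push_cast
  ring

end Perturbation

section Coupling

variable {ι κ σ τ : Type*} [Fintype ι] [Fintype κ]
  {s : Finset σ} {t : σ → Finset τ} {c : σ → ℝ}
  {X : σ → τ → Matrix ι ι ℂ} {Y : σ → τ → Matrix κ κ ℂ}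

lemma sum_sum_smul_kronecker_mulVec_pureTensor_eq_zero {g : ι → ℂ}
    (hX : ∀ i ∈ s, ∀ q ∈ t i, X i q *ᵥ g = 0) (ψ : κ → ℂ) :
    (∑ i ∈ s, ∑ q ∈ t i, c i • (X i q ⊗ₖ Y i q)) *ᵥ pureTensor g ψ = 0 := by
  simp only [sum_mulVec, smul_mulVec]
  refine Finset.sum_eq_zero fun i hi => Finset.sum_eq_zero fun q hq => ?_
  rw [kronecker_mulVec_pureTensor, hX i hi q hq, pureTensor_eq_zero_iff.mpr (Or.inl rfl),
    smul_zero]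

variable [DecidableEq ι] [DecidableEq κ]

lemma norm_sum_sum_smul_kronecker_le (hc : ∀ i ∈ s, 0 ≤ c i) :
    ‖∑ i ∈ s, ∑ q ∈ t i, c i • (X i q ⊗ₖ Y i q)‖ ≤
      ∑ i ∈ s, ∑ q ∈ t i, c i * (‖X i q‖ * ‖Y i q‖) := by
  refine (norm_sum_le _ _).trans (Finset.sum_le_sum fun i hi => ?_)
  refine (norm_sum_le _ _).trans (Finset.sum_le_sum fun q _ => ?_)
  rw [← Complex.coe_smul, norm_smul, Complex.norm_real, Real.norm_of_nonneg (hc i hi)]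
  exact mul_le_mul_of_nonneg_left (l2_opNorm_kronecker_le _ _) (hc i hi)

end Coupling

end Matrix

lemma geom_sum_Icc_one {x : ℝ} (hx : x ≠ 1) (k : ℕ) :
    ∑ i ∈ Finset.Icc 1 k, x ^ i = x * (1 - x ^ k) / (1 - x) := by
  rw [← Finset.Ico_add_one_right_eq_Icc, geom_sum_Ico' hx (by omega)]
  ring

lemma sum_Icc_pow_mul_le {x Qbar C : ℝ} (hx : x ∈ Set.Ioo (0 : ℝ) 1) (hC : 0 ≤ C) {k : ℕ}
    {Q : ℕ → ℕ} {a : ℕ → ℕ → ℝ} (hQ : ∀ i ∈ Finset.Icc 1 k, (Q i : ℝ) ≤ Qbar)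
    (ha : ∀ i ∈ Finset.Icc 1 k, ∀ q ∈ Finset.Icc 1 (Q i), a i q ≤ C) :
    ∑ i ∈ Finset.Icc 1 k, ∑ q ∈ Finset.Icc 1 (Q i), x ^ i * a i q ≤
      x * (1 - x ^ k) / (1 - x) * Qbar * C := by
  have hx0 : ∀ i, 0 ≤ x ^ i := fun i => pow_nonneg hx.1.le i
  calc ∑ i ∈ Finset.Icc 1 k, ∑ q ∈ Finset.Icc 1 (Q i), x ^ i * a i q
      ≤ ∑ i ∈ Finset.Icc 1 k, ∑ q ∈ Finset.Icc 1 (Q i), x ^ i * C :=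
        Finset.sum_le_sum fun i _ => Finset.sum_le_sum fun q hq =>
          mul_le_mul_of_nonneg_left (ha i ‹_› q hq) (hx0 i)
    _ = ∑ i ∈ Finset.Icc 1 k, (Q i : ℝ) * (x ^ i * C) := by simp
    _ ≤ ∑ i ∈ Finset.Icc 1 k, Qbar * (x ^ i * C) :=
        Finset.sum_le_sum fun i hi =>
          mul_le_mul_of_nonneg_right (hQ i hi) (mul_nonneg (hx0 i) hC)
    _ = x * (1 - x ^ k) / (1 - x) * Qbar * C := by
        rw [← Finset.mul_sum, ← Finset.sum_mul, geom_sum_Icc_one hx.2.ne]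
        ring

lemma sum_Icc_pow_mul_mul_lt {x Δ Qbar Xbar Ybar : ℝ} (hx : x ∈ Set.Ioo (0 : ℝ) 1) (hΔ : 0 < Δ)
    {k : ℕ} {Q : ℕ → ℕ} {a b : ℕ → ℕ → ℝ} (ha0 : ∀ i q, 0 ≤ a i q) (hb0 : ∀ i q, 0 ≤ b i q)
    (hQ : ∀ i ∈ Finset.Icc 1 k, (Q i : ℝ) ≤ Qbar)
    (ha : ∀ i ∈ Finset.Icc 1 k, ∀ q ∈ Finset.Icc 1 (Q i), a i q ≤ Xbar)
    (hb : ∀ i ∈ Finset.Icc 1 k, ∀ q ∈ Finset.Icc 1 (Q i), b i q ≤ Ybar)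
    (hsmall : x * (1 - x ^ k) / (1 - x) * Qbar * Xbar * Ybar < Δ) :
    ∑ i ∈ Finset.Icc 1 k, ∑ q ∈ Finset.Icc 1 (Q i), x ^ i * (a i q * b i q) < Δ := by
  by_cases hterm : ∃ i ∈ Finset.Icc 1 k, ∃ q, q ∈ Finset.Icc 1 (Q i)
  · obtain ⟨i, hi, q, hq⟩ := hterm
    have hXbar := (ha0 i q).trans (ha i hi q hq)
    have hYbar := (hb0 i q).trans (hb i hi q hq)
    refine (sum_Icc_pow_mul_le hx (mul_nonneg hXbar hYbar) hQ fun i hi q hq =>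
      mul_le_mul (ha i hi q hq) (hb i hi q hq) (hb0 i q) hXbar).trans_lt ?_
    linarith
  · push Not at hterm
    rwa [Finset.sum_eq_zero fun i hi => Finset.sum_eq_zero fun q hq => absurd hq (hterm i hi q)]

theorem superstable_ground_state_theorem_general
    {n m : ℕ} (k : ℕ) (Q : ℕ → ℕ)
    (HC : Matrix (Fin n) (Fin n) ℂ) (HR : Matrix (Fin m) (Fin m) ℂ)
    (X : ℕ → ℕ → Matrix (Fin n) (Fin n) ℂ) (Y : ℕ → ℕ → Matrix (Fin m) (Fin m) ℂ)
    (β lamC ΔC lamR Qbar Xbar Ybar : ℝ) (hβ : β ∈ Set.Ioo (0 : ℝ) 1)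
    (H : Matrix (Fin n × Fin m) (Fin n × Fin m) ℂ)
    (hH : H = HC ⊗ₖ (1 : Matrix (Fin m) (Fin m) ℂ)
        + (1 : Matrix (Fin n) (Fin n) ℂ) ⊗ₖ HR
        + ∑ i ∈ Finset.Icc 1 k, ∑ q ∈ Finset.Icc 1 (Q i),
            (β ^ i : ℝ) • (X i q ⊗ₖ Y i q))
    (hHerm : H.IsHermitian) (hHCherm : HC.IsHermitian) (hHRherm : HR.IsHermitian)
    (gC : Fin n → ℂ) (hgC : gC ≠ 0) (heig : HC.mulVec gC = (lamC : ℂ) • gC)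
    (hΔ : 0 < ΔC)
    (hgap : ∀ (v : Fin n → ℂ) (μ : ℝ), v ≠ 0 → HC.mulVec v = (μ : ℂ) • v →
      μ = lamC ∨ lamC + ΔC ≤ μ)
    (hsimple : ∀ v : Fin n → ℂ, HC.mulVec v = (lamC : ℂ) • v → ∃ c : ℂ, v = c • gC)
    (hsuperstable : ∀ i ∈ Finset.Icc 1 k, ∀ q ∈ Finset.Icc 1 (Q i),
      (X i q).mulVec gC = 0)
    (hQbar : ∀ i ∈ Finset.Icc 1 k, (Q i : ℝ) ≤ Qbar)
    (hXbar : ∀ i ∈ Finset.Icc 1 k, ∀ q ∈ Finset.Icc 1 (Q i), opNorm (X i q) ≤ Xbar)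
    (hYbar : ∀ i ∈ Finset.Icc 1 k, ∀ q ∈ Finset.Icc 1 (Q i), opNorm (Y i q) ≤ Ybar)
    (hlamR : IsLeast {μ : ℝ | ∃ ψ : Fin m → ℂ, ψ ≠ 0 ∧ HR.mulVec ψ = (μ : ℂ) • ψ} lamR)
    (hsmall : β * (1 - β ^ k) / (1 - β) * Qbar * Xbar * Ybar < ΔC) :
    IsLeast {E : ℝ | ∃ v : Fin n × Fin m → ℂ, v ≠ 0 ∧ H.mulVec v = (E : ℂ) • v}
      (lamC + lamR) ∧
    (∀ v : Fin n × Fin m → ℂ, v ≠ 0 →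
      H.mulVec v = ((lamC + lamR : ℝ) : ℂ) • v →
      ∃ ψ : Fin m → ℂ, (v = fun p => gC p.1 * ψ p.2) ∧
        HR.mulVec ψ = (lamR : ℂ) • ψ) := by
  subst hH
  set W := ∑ i ∈ Finset.Icc 1 k, ∑ q ∈ Finset.Icc 1 (Q i), (β ^ i : ℝ) • (X i q ⊗ₖ Y i q)
  have hW : W.IsHermitian := by
    convert (hHerm.sub (hHCherm.kronecker isHermitian_one)).sub
      (isHermitian_one.kronecker hHRherm) using 1
    abel
  have hWg : ∀ ψ, W *ᵥ pureTensor gC ψ = 0 :=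
    sum_sum_smul_kronecker_mulVec_pureTensor_eq_zero hsuperstable
  have hWΔ : ‖W‖ < ΔC :=
    (norm_sum_sum_smul_kronecker_le fun i _ => pow_nonneg hβ.1.le i).trans_lt
      (sum_Icc_pow_mul_mul_lt hβ hΔ (fun _ _ => norm_nonneg _) (fun _ _ => norm_nonneg _)
        hQbar hXbar hYbar hsmall)
  have hspec := fun v (hv : v ≠ 0) E hE => le_and_exists_pureTensor_of_mulVec_eq_smul hHCherm
    hHRherm hW hgC heig hgap hsimple (fun ψ μ hψ h => hlamR.2 ⟨ψ, hψ, h⟩) hWg hWΔ hv (E := E) hE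
  obtain ⟨ψ₀, hψ₀, hψ₀eig⟩ := hlamR.1
  refine ⟨⟨⟨pureTensor gC ψ₀, ?_, kronecker_add_mulVec_pureTensor_eq_smul heig hWg hψ₀eig⟩,
    fun E ⟨v, hv, hE⟩ => (hspec v hv E hE).1⟩, fun v hv hE => (hspec v hv _ hE).2 rfl⟩
  rw [Ne, pureTensor_eq_zero_iff]
  tauto

/-- Theorem 1 (abstract form): for
`H = H_C ⊗ 1 + 1 ⊗ H_R + ∑_{i=1}^k ∑_{q=1}^{Q_i} β^i X_{i,q} ⊗ Y_{i,q}` with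
`β ∈ (0,1)`, `H_C` having simple ground state `gC` (energy `lamC`, gap `ΔC`),
superstability `X_{i,q} gC = 0`, and
`β (1-β^k)/(1-β) · Q̄ · X̄ · Ȳ < ΔC`, the ground energy of `H` is
`lamC + min spec H_R` and every ground state has the form `gC ⊗ ψ` with `ψ` a ground
state of `H_R`. -/
theorem superstable_ground_state_theorem
    {n m : ℕ} (k : ℕ) (hk : 1 ≤ k) (Q : ℕ → ℕ)
    (HC : Matrix (Fin n) (Fin n) ℂ) (HR : Matrix (Fin m) (Fin m) ℂ)
    (X : ℕ → ℕ → Matrix (Fin n) (Fin n) ℂ) (Y : ℕ → ℕ → Matrix (Fin m) (Fin m) ℂ)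
    (β lamC ΔC lamR Qbar Xbar Ybar : ℝ) (hβ : β ∈ Set.Ioo (0 : ℝ) 1)
    (H : Matrix (Fin n × Fin m) (Fin n × Fin m) ℂ)
    (hH : H = HC ⊗ₖ (1 : Matrix (Fin m) (Fin m) ℂ)
        + (1 : Matrix (Fin n) (Fin n) ℂ) ⊗ₖ HR
        + ∑ i ∈ Finset.Icc 1 k, ∑ q ∈ Finset.Icc 1 (Q i),
            (β ^ i : ℝ) • (X i q ⊗ₖ Y i q))
    (hHerm : H.IsHermitian) (hHCherm : HC.IsHermitian) (hHRherm : HR.IsHermitian)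
    (gC : Fin n → ℂ) (hgC : gC ≠ 0) (heig : HC.mulVec gC = (lamC : ℂ) • gC)
    (hΔ : 0 < ΔC)
    (hgap : ∀ (v : Fin n → ℂ) (μ : ℝ), v ≠ 0 → HC.mulVec v = (μ : ℂ) • v →
      μ = lamC ∨ lamC + ΔC ≤ μ)
    (hsimple : ∀ v : Fin n → ℂ, HC.mulVec v = (lamC : ℂ) • v → ∃ c : ℂ, v = c • gC)
    (hsuperstable : ∀ i ∈ Finset.Icc 1 k, ∀ q ∈ Finset.Icc 1 (Q i),
      (X i q).mulVec gC = 0)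
    (hQbar : ∀ i ∈ Finset.Icc 1 k, (Q i : ℝ) ≤ Qbar)
    (hXbar : ∀ i ∈ Finset.Icc 1 k, ∀ q ∈ Finset.Icc 1 (Q i), opNorm (X i q) ≤ Xbar)
    (hYbar : ∀ i ∈ Finset.Icc 1 k, ∀ q ∈ Finset.Icc 1 (Q i), opNorm (Y i q) ≤ Ybar)
    (hlamR : IsLeast {μ : ℝ | ∃ ψ : Fin m → ℂ, ψ ≠ 0 ∧ HR.mulVec ψ = (μ : ℂ) • ψ} lamR)
    (hsmall : β * (1 - β ^ k) / (1 - β) * Qbar * Xbar * Ybar < ΔC) :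
    IsLeast {E : ℝ | ∃ v : Fin n × Fin m → ℂ, v ≠ 0 ∧ H.mulVec v = (E : ℂ) • v}
      (lamC + lamR) ∧
    (∀ v : Fin n × Fin m → ℂ, v ≠ 0 →
      H.mulVec v = ((lamC + lamR : ℝ) : ℂ) • v →
      ∃ ψ : Fin m → ℂ, (v = fun p => gC p.1 * ψ p.2) ∧
        HR.mulVec ψ = (lamR : ℂ) • ψ) :=
  superstable_ground_state_theorem_general k Q HC HR X Y β lamC ΔC lamR Qbar Xbar Ybar hβ H hH hHerm
    hHCherm hHRherm gC hgC heig hΔ hgap hsimple hsuperstable hQbar hXbar hYbar hlamR hsmall
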